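/- arXiv:1103.1176 — 2 statements merged into one kernel-verified Lean document; each statement's English description precedes it below -/
import Mathlib

section
/- For every positive integer n and all complex numbers x, z: ∑_{A ∈ ASM(n), μ(A)=0} x^{ν(A)} z^{ρ(A)} = [n]_{xz} · ∏_{m=1}^{n−1} [m]_x, and ∑_{D ∈ DPP(n), μ(D)=0} x^{ν(D)} z^{ρ(D)} = [n]_{xz} · ∏_{m=1}^{n−1} [m]_x, where [m]_q = 1 + q + … + q^{m−1}. -/
open Finset Matrix

/-- An n×n alternating sign matrix: entries in {-1,0,1}, row and column sums 1,
and nonzero entries alternate in sign along each row and each column. -/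
def IsASM (n : ℕ) (A : Matrix (Fin n) (Fin n) ℤ) : Prop :=
  (∀ i j, A i j = -1 ∨ A i j = 0 ∨ A i j = 1) ∧
  (∀ i, ∑ j, A i j = 1) ∧
  (∀ j, ∑ i, A i j = 1) ∧
  (∀ (i j₁ j₂ : Fin n), j₁ < j₂ → A i j₁ ≠ 0 → A i j₂ ≠ 0 →
    (∀ j, j₁ < j → j < j₂ → A i j = 0) → A i j₂ = -A i j₁) ∧
  (∀ (j i₁ i₂ : Fin n), i₁ < i₂ → A i₁ j ≠ 0 → A i₂ j ≠ 0 →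
    (∀ i, i₁ < i → i < i₂ → A i j = 0) → A i₂ j = -A i₁ j)

/-- ν(A) = ∑_{1≤i<i'≤n, 1≤j'≤j≤n} A_{i j} A_{i' j'}. -/
def nuASM {n : ℕ} (A : Matrix (Fin n) (Fin n) ℤ) : ℤ :=
  ∑ i : Fin n, ∑ i' : Fin n, ∑ j : Fin n, ∑ j' : Fin n,
    if i < i' ∧ j' ≤ j then A i j * A i' j' else 0

/-- μ(A) = number of entries of A equal to -1. -/
def muASM {n : ℕ} (A : Matrix (Fin n) (Fin n) ℤ) : ℕ :=
  (Finset.univ.filter fun p : Fin n × Fin n => A p.1 p.2 = -1).card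

open Classical in
/-- ρ(A) = number of 0's to the left of the (unique) 1 in the first row of A. -/
noncomputable def rhoASM {n : ℕ} (A : Matrix (Fin n) (Fin n) ℤ) : ℕ :=
  (Finset.univ.filter fun j : Fin n =>
    ∃ i : Fin n, (i : ℕ) = 0 ∧ A i j = 0 ∧ ∃ j' : Fin n, j < j' ∧ A i j' = 1).card

/-- A descending plane partition, encoded as the list of its rows (row i+1 of the array,
which occupies columns i+1,…,λ_{i+1}+i, is the (i)-th list, 0-indexed).
Parts are positive, decrease weakly along rows, decrease strictly down columns
(the entry of row i+2 at inner position k sits below the entry of row i+1 at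
inner position k+1), and D_{ii} > λ_i ≥ D_{i+1,i+1}. -/
def IsDPP (rows : List (List ℕ)) : Prop :=
  (∀ r ∈ rows, r ≠ [] ∧ (∀ p ∈ r, 0 < p) ∧ r.Chain' (· ≥ ·) ∧ r.length < r.getD 0 0) ∧
  (∀ i : ℕ, i + 1 < rows.length →
    (∀ k < (rows.getD (i + 1) []).length,
      (rows.getD (i + 1) []).getD k 0 < (rows.getD i []).getD (k + 1) 0) ∧
    (rows.getD (i + 1) []).getD 0 0 ≤ (rows.getD i []).length)

/-- ν(D) = number of parts with D_{i j} > j − i (the part of row i at inner position k,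
0-indexed, has j − i = k). -/
def nuDPP (rows : List (List ℕ)) : ℕ :=
  (rows.map fun r => ((List.range r.length).filter fun k => k < r.getD k 0).length).sum

/-- μ(D) = number of parts with D_{i j} ≤ j − i (the special parts). -/
def muDPP (rows : List (List ℕ)) : ℕ :=
  (rows.map fun r => ((List.range r.length).filter fun k => r.getD k 0 ≤ k).length).sum

/-- ρ(D) = number of parts of D equal to n. -/
def rhoDPP (n : ℕ) (rows : List (List ℕ)) : ℕ :=
  (rows.map fun r => r.count n).sum

/-- DPP(n): the set of descending plane partitions all of whose parts are at most n. -/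
def DPPset (n : ℕ) : Set (List (List ℕ)) :=
  {rows | IsDPP rows ∧ ∀ r ∈ rows, ∀ p ∈ r, p ≤ n}

/-!
A permutation matrix `P_σ` is exactly an ASM without `-1` entries; for it `ν` counts the
inversions of `σ` and `ρ` is `σ 0`. Choosing `σ 0 = p` first and then an arbitrary permutation of
the remaining positions (relabelled order-preservingly) splits off `p` inversions, which gives the
factor `[n]_{xz}` and, by induction, `[1]_x ⋯ [n-1]_x`.

A DPP without special parts is recorded faithfully by reading its rows one after another: the
reading is weakly decreasing, and column strictness together with `D i j > j - i` forces every
part `v` to occur fewer than `v` times. Conversely such a sequence is cut back into rows greedily,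
a row ending just before the first later part not exceeding its position in the row. Under this
bijection `ν` is the number of parts and `ρ` the multiplicity of `n`; choosing the multiplicity
of each `v` in `0, …, v - 1` independently gives `[1]_x ⋯ [n-1]_x · [n]_{xz}`.
-/

namespace List

theorem countP_le_eq_countP_lt_add_count (v : ℕ) (L : List ℕ) :
    L.countP (v ≤ ·) = L.countP (v < ·) + L.count v := by
  induction L with
  | nil => rfl
  | cons a L ih =>
    simp only [countP_cons, count_cons, ih, beq_iff_eq, decide_eq_true_eq]
    split_ifs <;> omega

variable {L : List ℕ}

/-- In a weakly decreasing list the parts satisfying an upward closed predicate form a prefix.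
Reading out of range gives `0`, which fails the predicate. -/
theorem lt_countP_iff_getD (hL : L.Pairwise (· ≥ ·)) {P : ℕ → Prop} [DecidablePred P]
    (hP : ∀ a b, a ≤ b → P a → P b) (hP0 : ¬P 0) (k : ℕ) :
    k < L.countP (P ·) ↔ P (L.getD k 0) := by
  induction L generalizing k with
  | nil => simpa using hP0
  | cons b L ih =>
    obtain ⟨hb, hL⟩ := pairwise_cons.1 hL
    by_cases hPb : P b
    · cases k with
      | zero => simp [hPb]
      | succ k => simp [hPb, ih hL]
    · have hnone : ∀ a ∈ L, ¬P a := fun a ha h ↦ hPb (hP a b (hb a ha) h)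
      have hzero : L.countP (P ·) = 0 := countP_eq_zero.2 (by simpa using hnone)
      cases k with
      | zero => simp [hPb, hzero]
      | succ k =>
        simp only [countP_cons, hzero, hPb, getD_cons_succ, decide_false]
        simp only [Bool.false_eq_true, if_false, add_zero, Nat.not_lt_zero, false_iff]
        rcases lt_or_ge k L.length with hk | hk
        · rw [getD_eq_getElem _ _ hk]
          exact hnone _ (getElem_mem hk)
        · rwa [getD_eq_default _ _ hk]

theorem lt_countP_le_iff (hL : L.Pairwise (· ≥ ·)) {v : ℕ} (hv : 0 < v) (k : ℕ) :
    k < L.countP (v ≤ ·) ↔ v ≤ L.getD k 0 :=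
  lt_countP_iff_getD hL (fun _ _ h h' ↦ h'.trans h) (by omega) k

theorem lt_countP_lt_iff (hL : L.Pairwise (· ≥ ·)) (v k : ℕ) :
    k < L.countP (v < ·) ↔ v < L.getD k 0 :=
  lt_countP_iff_getD hL (fun _ _ h h' ↦ h'.trans_le h) (by omega) k

/-- Between two occurrences of `v` in a weakly decreasing list every part equals `v`. -/
theorem le_add_count_of_getD_eq (hL : L.Pairwise (· ≥ ·)) {v i j : ℕ} (hv : 0 < v)
    (hi : L.getD i 0 = v) (hj : L.getD j 0 = v) : j + 1 ≤ i + L.count v := by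
  have h₁ := (lt_countP_le_iff hL hv j).2 hj.ge
  have h₂ := (lt_countP_lt_iff hL v i).not.2 hi.le.not_gt
  have := countP_le_eq_countP_lt_add_count v L
  omega

theorem getD_le_getD (hL : L.Pairwise (· ≥ ·)) {i j : ℕ} (hij : i ≤ j) :
    L.getD j 0 ≤ L.getD i 0 := by
  rcases lt_or_ge j L.length with hj | hj
  · rcases hij.eq_or_lt with rfl | hij
    · rfl
    rw [getD_eq_getElem _ _ (hij.trans hj), getD_eq_getElem _ _ hj]
    exact pairwise_iff_getElem.1 hL i j _ hj hij
  · rw [getD_eq_default _ _ hj]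
    exact Nat.zero_le _

theorem getD_take {c k : ℕ} (hk : k < c) : (L.take c).getD k 0 = L.getD k 0 := by
  simp [getD_eq_getElem?_getD, hk]

theorem getD_drop (c k : ℕ) : (L.drop c).getD k 0 = L.getD (c + k) 0 := by
  simp [getD_eq_getElem?_getD]

theorem Sublist.forall_count_lt {M : List ℕ} (hsub : M <+ L) (h : ∀ v ∈ L, L.count v < v) :
    ∀ v ∈ M, M.count v < v :=
  fun v hv ↦ (hsub.count_le v).trans_lt (h v (hsub.subset hv))

theorem pos_of_forall_count_lt (h : ∀ v ∈ L, L.count v < v) : ∀ v ∈ L, 0 < v :=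
  fun v hv ↦ (count_pos_iff.2 hv).trans (h v hv)

theorem pairwise_replicate_append {a p : ℕ} {L : List ℕ} (hL : L.Pairwise (· ≥ ·))
    (hle : ∀ v ∈ L, v ≤ a) : (replicate p a ++ L).Pairwise (· ≥ ·) :=
  pairwise_append.2 ⟨by simp [pairwise_replicate], hL,
    fun b hb c hc ↦ eq_of_mem_replicate hb ▸ hle c hc⟩

theorem replicate_count_append_filter_le {n : ℕ} {L : List ℕ} (hL : L.Pairwise (· ≥ ·))
    (hle : ∀ v ∈ L, v ≤ n + 1) :
    replicate (L.count (n + 1)) (n + 1) ++ L.filter (· ≤ n) = L := by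
  -- both sides are weakly decreasing and have the same parts
  refine Perm.eq_of_pairwise' (pairwise_replicate_append (hL.sublist filter_sublist)
    fun v hv ↦ ?_) hL ?_
  · have := (mem_filter.1 hv).2
    simp only [decide_eq_true_eq] at this
    omega
  · have hrest : L.filter (· ≤ n) = L.filter (fun v ↦ !decide (v = n + 1)) :=
      filter_congr fun v hv ↦ by
        have := hle v hv
        rw [Bool.eq_iff_iff]
        simp only [decide_eq_true_eq, Bool.not_eq_eq_eq_not, Bool.not_true,
          decide_eq_false_iff_not]
        omega
    rw [hrest, ← filter_eq]
    exact filter_append_perm _ L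

end List

namespace Equiv.Perm

variable {n : ℕ}

def inversionCount (σ : Perm (Fin n)) : ℕ :=
  #{p : Fin n × Fin n | p.1 < p.2 ∧ σ p.2 < σ p.1}

theorem inversionCount_eq_sum (σ : Perm (Fin n)) :
    σ.inversionCount = ∑ a, ∑ b, if a < b ∧ σ b < σ a then 1 else 0 := by
  rw [inversionCount, card_filter, ← univ_product_univ, sum_product]

def consAt (p : Fin (n + 1)) (τ : Perm (Fin n)) : Perm (Fin (n + 1)) :=
  ((finSuccEquiv' 0).trans τ.optionCongr).trans (finSuccEquiv' p).symm

@[simp]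
theorem consAt_zero (p : Fin (n + 1)) (τ : Perm (Fin n)) : consAt p τ 0 = p := by
  simp [consAt]

@[simp]
theorem consAt_succ (p : Fin (n + 1)) (τ : Perm (Fin n)) (i : Fin n) :
    consAt p τ i.succ = p.succAbove (τ i) := by
  have : finSuccEquiv' 0 i.succ = some i := by rw [finSuccEquiv'_zero, finSuccEquiv_succ]
  simp [consAt, this]

theorem bijective_consAt : Function.Bijective fun pτ : Fin (n + 1) × Perm (Fin n) ↦
    consAt pτ.1 pτ.2 := by
  refine (Fintype.bijective_iff_injective_and_card _).2 ⟨?_, ?_⟩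
  · rintro ⟨p, τ⟩ ⟨q, υ⟩ h
    have hp : p = q := by simpa using congr($h 0)
    subst hp
    refine Prod.ext rfl (Equiv.ext fun i ↦ Fin.succAbove_right_injective (p := p) ?_)
    simpa using congr($h i.succ)
  · simp [Fintype.card_perm, Nat.factorial_succ]

theorem inversionCount_consAt (p : Fin (n + 1)) (τ : Perm (Fin n)) :
    (consAt p τ).inversionCount = p + τ.inversionCount := by
  have below_p : ∑ b : Fin n, (if b.castSucc < p then 1 else 0) = (p : ℕ) := by
    rw [sum_boole, Nat.cast_id]
    simpa [Fin.lt_def, ← Fin.val_fin_lt] using (Fin.card_filter_val_lt (n := n) (m := p)).trans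
      (min_eq_right (Nat.lt_succ_iff.1 p.isLt))
  simp only [inversionCount_eq_sum, Fin.sum_univ_succ, consAt_zero, consAt_succ,
    Fin.succAbove_lt_iff_castSucc_lt, Fin.succAbove_lt_succAbove_iff, Fin.succ_lt_succ_iff,
    Fin.succ_pos, true_and, false_and, if_false, zero_add, Fin.not_lt_zero]
  rw [Equiv.sum_comp τ (fun b ↦ if b.castSucc < p then 1 else 0), below_p]

variable {R : Type*} [CommSemiring R]

theorem sum_pow_inversionCount_mul_pow_apply_zero (x z : R) :
    ∑ σ : Perm (Fin (n + 1)), x ^ σ.inversionCount * z ^ (σ 0 : ℕ) =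
      (∑ i ∈ range (n + 1), (x * z) ^ i) * ∑ τ : Perm (Fin n), x ^ τ.inversionCount := by
  rw [← Fintype.sum_bijective _ bijective_consAt
    (fun pτ ↦ (x * z) ^ (pτ.1 : ℕ) * x ^ pτ.2.inversionCount) _
    (fun pτ ↦ by
      simp only [consAt_zero, inversionCount_consAt, pow_add, mul_pow]
      ring),
    Fintype.sum_prod_type, ← Fin.sum_univ_eq_sum_range, sum_mul]
  simp only [mul_sum]

theorem sum_pow_inversionCount (x : R) :
    ∑ σ : Perm (Fin n), x ^ σ.inversionCount =
      ∏ m ∈ range n, ∑ i ∈ range (m + 1), x ^ i := by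
  induction n with
  | zero => simp [inversionCount]
  | succ n ih =>
    simpa [prod_range_succ, ih, mul_comm] using
      sum_pow_inversionCount_mul_pow_apply_zero x (1 : R) (n := n)

end Equiv.Perm

theorem Fintype.existsUnique_eq_one_of_sum_eq_one {ι : Type*} [Fintype ι] {f : ι → ℤ}
    (hf : ∀ i, f i = 0 ∨ f i = 1) (hsum : ∑ i, f i = 1) : ∃! i, f i = 1 := by
  have hcard : #{i | f i = 1} = 1 := by
    have : ∑ i, f i = ∑ i, if f i = 1 then 1 else 0 :=
      Finset.sum_congr rfl fun i _ ↦ by rcases hf i with h | h <;> simp [h]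
    rw [this, sum_boole] at hsum
    exact_mod_cast hsum
  obtain ⟨a, ha⟩ := card_eq_one.1 hcard
  exact ⟨a, by simpa using ha.ge (mem_singleton_self a), fun i hi ↦ by
    simpa using ha.le (mem_filter.2 ⟨mem_univ i, hi⟩)⟩

section PermMatrix

variable {n : ℕ}

@[simp]
theorem Equiv.Perm.permMatrix_apply' {ι R : Type*} [DecidableEq ι] [Zero R] [One R]
    (σ : Equiv.Perm ι) (i j : ι) : σ.permMatrix R i j = if σ i = j then 1 else 0 := by
  simp [PEquiv.toMatrix_apply, Equiv.toPEquiv_apply]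

theorem Equiv.Perm.permMatrix_injective {ι R : Type*} [DecidableEq ι] [Zero R] [One R]
    [NeZero (1 : R)] : Function.Injective fun σ : Equiv.Perm ι ↦ σ.permMatrix R := by
  intro σ τ h
  exact Equiv.ext fun i ↦ (by simpa using congr($h i (σ i)) : τ i = σ i).symm

theorem isASM_permMatrix (σ : Equiv.Perm (Fin n)) : IsASM n (σ.permMatrix ℤ) := by
  refine ⟨fun i j ↦ by by_cases h : σ i = j <;> simp [h], fun i ↦ by simp,
    fun j ↦ by simp [← Equiv.eq_symm_apply], fun i j₁ j₂ hj h₁ h₂ _ ↦ ?_,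
    fun j i₁ i₂ hi h₁ h₂ _ ↦ ?_⟩
  all_goals simp only [Equiv.Perm.permMatrix_apply', ne_eq, ite_eq_right_iff, one_ne_zero,
    imp_false, not_not] at h₁ h₂
  · exact absurd (h₁.symm.trans h₂) hj.ne
  · exact absurd (σ.injective (h₁.trans h₂.symm)) hi.ne

theorem muASM_permMatrix (σ : Equiv.Perm (Fin n)) : muASM (σ.permMatrix ℤ) = 0 := by
  simp [muASM, apply_ite (· = (-1 : ℤ))]

theorem exists_permMatrix_eq_of_muASM_eq_zero {A : Matrix (Fin n) (Fin n) ℤ} (hA : IsASM n A)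
    (hμ : muASM A = 0) : ∃ σ : Equiv.Perm (Fin n), σ.permMatrix ℤ = A := by
  obtain ⟨hentries, hrows, hcols, -, -⟩ := hA
  have hno_neg : ∀ i j, A i j ≠ -1 := by
    simpa only [muASM, card_eq_zero, filter_eq_empty_iff, mem_univ, forall_const,
      Prod.forall] using hμ
  have h01 i j : A i j = 0 ∨ A i j = 1 := (hentries i j).resolve_left (hno_neg i j)
  choose f hf using fun i ↦ Fintype.existsUnique_eq_one_of_sum_eq_one (h01 i) (hrows i)
  have hcol j := Fintype.existsUnique_eq_one_of_sum_eq_one (h01 · j) (hcols j)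
  have hinj : Function.Injective f := fun i i' h ↦ (hcol (f i)).unique (hf i).1 (h ▸ (hf i').1)
  refine ⟨Equiv.ofBijective f hinj.bijective_of_finite, ?_⟩
  ext i j
  by_cases h : f i = j
  · simp [h ▸ (hf i).1, h]
  · simp only [Equiv.Perm.permMatrix_apply', Equiv.ofBijective_apply, h, if_false]
    exact ((h01 i j).resolve_right fun h1 ↦ h ((hf i).2 j h1).symm).symm

theorem nuASM_permMatrix (σ : Equiv.Perm (Fin n)) :
    nuASM (σ.permMatrix ℤ) = σ.inversionCount := by
  have hterm : ∀ i i' j j',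
      (if i < i' ∧ j' ≤ j then σ.permMatrix ℤ i j * σ.permMatrix ℤ i' j' else 0) =
        if σ i = j then if σ i' = j' then if i < i' ∧ σ i' < σ i then 1 else 0 else 0
        else 0 := by
    intro i i' j j'
    by_cases hj : σ i = j <;> by_cases hj' : σ i' = j' <;> simp only [hj, hj',
      Equiv.Perm.permMatrix_apply', if_true, if_false, mul_zero, mul_one, ite_self]
    subst hj hj'
    exact if_congr (and_congr_right fun h ↦ (σ.injective.ne h.ne').le_iff_lt) rfl rfl
  simp only [nuASM, hterm, ← ite_sum_zero, sum_ite_eq, mem_univ, if_true,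
    Equiv.Perm.inversionCount_eq_sum]
  push_cast
  rfl

theorem rhoASM_permMatrix (σ : Equiv.Perm (Fin (n + 1))) :
    rhoASM (σ.permMatrix ℤ) = σ 0 := by
  rw [rhoASM, ← Fin.card_Iio]
  congr 1
  ext j
  simpa [Fin.val_eq_zero_iff] using fun h : j < σ 0 ↦ h.ne'

theorem setOf_isASM_muASM_eq_zero :
    {A : Matrix (Fin n) (Fin n) ℤ | IsASM n A ∧ muASM A = 0} =
      Set.range fun σ : Equiv.Perm (Fin n) ↦ σ.permMatrix ℤ := by
  ext A
  constructor
  · rintro ⟨hA, hμ⟩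
    exact exists_permMatrix_eq_of_muASM_eq_zero hA hμ
  · rintro ⟨σ, rfl⟩
    exact ⟨isASM_permMatrix σ, muASM_permMatrix σ⟩

end PermMatrix

def IsDPPRow (r : List ℕ) : Prop :=
  r ≠ [] ∧ (∀ p ∈ r, 0 < p) ∧ r.Pairwise (· ≥ ·) ∧ r.length < r.getD 0 0

/-- The conditions of `IsDPP` between a row `r` and the next row `s`; they hold trivially for
`s = []`, which is what `getD` returns when `r` is the last row. -/
def FitsUnder (s r : List ℕ) : Prop :=
  (∀ k < s.length, s.getD k 0 < r.getD (k + 1) 0) ∧ s.getD 0 0 ≤ r.length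

def NoSpecialParts (rows : List (List ℕ)) : Prop :=
  ∀ r ∈ rows, ∀ k < r.length, k < r.getD k 0

theorem isDPP_nil : IsDPP [] := by
  simp [IsDPP]

theorem isDPP_cons_iff {r : List ℕ} {rest : List (List ℕ)} :
    IsDPP (r :: rest) ↔ IsDPPRow r ∧ FitsUnder (rest.getD 0 []) r ∧ IsDPP rest := by
  constructor
  · rintro ⟨hrows, hadj⟩
    obtain ⟨hne, hpos, hchain, hlen⟩ := hrows r List.mem_cons_self
    refine ⟨⟨hne, hpos, List.isChain_iff_pairwise.1 hchain, hlen⟩, ?_,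
      fun s hs ↦ hrows s (List.mem_cons_of_mem _ hs),
      fun i hi ↦ by simpa using hadj (i + 1) (by simpa using hi)⟩
    rcases rest with _ | ⟨s, rest⟩
    · simp [FitsUnder]
    · simpa [FitsUnder] using hadj 0 (by simp)
  · rintro ⟨⟨hne, hpos, hpw, hlen⟩, hfit, hrows, hadj⟩
    refine ⟨List.forall_mem_cons.2
      ⟨⟨hne, hpos, List.isChain_iff_pairwise.2 hpw, hlen⟩, hrows⟩, fun i hi ↦ ?_⟩
    cases i with
    | zero => simpa [FitsUnder] using hfit
    | succ i => simpa using hadj i (by simpa using hi)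

theorem noSpecialParts_cons_iff {r : List ℕ} {rest : List (List ℕ)} :
    NoSpecialParts (r :: rest) ↔ (∀ k < r.length, k < r.getD k 0) ∧ NoSpecialParts rest :=
  List.forall_mem_cons

theorem muDPP_eq_zero_iff (rows : List (List ℕ)) : muDPP rows = 0 ↔ NoSpecialParts rows := by
  simp only [muDPP, NoSpecialParts, List.sum_eq_zero_iff, List.mem_map, forall_exists_index,
    and_imp, forall_apply_eq_imp_iff₂, List.length_eq_zero_iff, List.filter_eq_nil_iff,
    List.mem_range, decide_eq_true_eq, not_le]

theorem nuDPP_eq_length_flatten {rows : List (List ℕ)} (h : NoSpecialParts rows) :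
    nuDPP rows = rows.flatten.length := by
  rw [nuDPP, List.length_flatten]
  congr 1
  refine List.map_congr_left fun r hr ↦ ?_
  rw [List.filter_eq_self.2 fun k hk ↦ by simpa using h r hr k (List.mem_range.1 hk),
    List.length_range]

theorem rhoDPP_eq_count_flatten (n : ℕ) (rows : List (List ℕ)) :
    rhoDPP n rows = rows.flatten.count n := by
  rw [rhoDPP, List.count_flatten]

namespace IsDPP

variable {r : List ℕ} {rest rows : List (List ℕ)}

theorem le_of_mem_flatten (h : IsDPP rows) :
    ∀ p ∈ rows.flatten, p ≤ (rows.getD 0 []).getD 0 0 := by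
  induction rows with
  | nil => simp
  | cons r rest ih =>
    obtain ⟨⟨-, -, hr, hlen⟩, ⟨-, hhead⟩, hrest⟩ := isDPP_cons_iff.1 h
    simp only [List.flatten_cons, List.mem_append, List.getD_cons_zero]
    rintro p (hp | hp)
    · obtain ⟨k, hk, rfl⟩ := List.mem_iff_getElem.1 hp
      have := List.getD_le_getD hr (Nat.zero_le k)
      rwa [List.getD_eq_getElem _ _ hk] at this
    · exact ((ih hrest p hp).trans hhead).trans hlen.le

theorem pairwise_flatten (h : IsDPP rows) (hμ : NoSpecialParts rows) :
    rows.flatten.Pairwise (· ≥ ·) := by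
  induction rows with
  | nil => simp
  | cons r rest ih =>
    obtain ⟨⟨hne, -, hr, -⟩, ⟨-, hhead⟩, hrest⟩ := isDPP_cons_iff.1 h
    obtain ⟨hμr, hμrest⟩ := noSpecialParts_cons_iff.1 hμ
    rw [List.flatten_cons, List.pairwise_append]
    refine ⟨hr, ih hrest hμrest, fun a ha b hb ↦ ?_⟩
    have hlen : 0 < r.length := List.length_pos_iff.2 hne
    obtain ⟨k, hk, rfl⟩ := List.mem_iff_getElem.1 ha
    have hlast := List.getD_le_getD hr (show k ≤ r.length - 1 by omega)
    rw [List.getD_eq_getElem _ _ hk] at hlast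
    -- parts of later rows are at most `r.length`, the parts of `r` at least `r.length`
    have := hμr (r.length - 1) (by omega)
    have := le_of_mem_flatten hrest b hb
    omega

-- Column strictness: the parts `≥ v` of the next row sit under parts `> v` of `r`, one place
-- to the right.
theorem countP_next_eq_zero_or_lt (h : IsDPP (r :: rest)) {v : ℕ} (hv : 0 < v) :
    (rest.getD 0 []).countP (v ≤ ·) = 0 ∨
      (rest.getD 0 []).countP (v ≤ ·) < r.countP (v < ·) := by
  obtain ⟨⟨-, -, hr, -⟩, hfit, hrest⟩ := isDPP_cons_iff.1 h
  set s := rest.getD 0 []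
  have hs : s.Pairwise (· ≥ ·) := by
    rcases rest with _ | ⟨s, rest⟩
    · simp [s]
    · exact (isDPP_cons_iff.1 hrest).1.2.2.1
  set a := s.countP (v ≤ ·)
  refine a.eq_zero_or_pos.imp_right fun hpos ↦ ?_
  have hlast : v ≤ s.getD (a - 1) 0 := (List.lt_countP_le_iff hs hv _).1 (by omega)
  have hlen : a - 1 < s.length := by
    have : a ≤ s.length := List.countP_le_length
    omega
  have := hfit.1 (a - 1) hlen
  rw [Nat.sub_add_cancel hpos] at this
  exact (List.lt_countP_lt_iff hr v a).2 (by omega)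

theorem count_flatten_le (h : IsDPP rows) {v : ℕ} (hv : 0 < v) :
    rows.flatten.count v ≤ (rows.getD 0 []).countP (v ≤ ·) := by
  induction rows with
  | nil => simp
  | cons r rest ih =>
    simp only [List.flatten_cons, List.count_append, List.getD_cons_zero]
    have := List.countP_le_eq_countP_lt_add_count v r
    have := ih (isDPP_cons_iff.1 h).2.2
    have := h.countP_next_eq_zero_or_lt hv
    omega

theorem count_flatten_lt (h : IsDPP rows) (hμ : NoSpecialParts rows) {v : ℕ} (hv : 0 < v) :
    rows.flatten.count v < v := by
  induction rows with
  | nil => simpa using hv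
  | cons r rest ih =>
    obtain ⟨⟨-, -, hr, hlen⟩, -, hrest⟩ := isDPP_cons_iff.1 h
    obtain ⟨hμr, hμrest⟩ := noSpecialParts_cons_iff.1 hμ
    simp only [List.flatten_cons, List.count_append]
    rcases Nat.eq_zero_or_pos (r.count v) with hc | hc
    · have := ih hrest hμrest
      omega
    set A := r.countP (v ≤ ·)
    set B := r.countP (v < ·)
    have hsplit : A = B + r.count v := List.countP_le_eq_countP_lt_add_count v r
    have hA : A ≤ r.length := List.countP_le_length
    -- the last part `≥ v` of `r` equals `v` and sits at index `A - 1 < v`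
    have hAv : A ≤ v := by
      have h₁ := (List.lt_countP_le_iff hr hv (A - 1)).1 (by omega)
      have h₂ := (List.lt_countP_lt_iff hr v (A - 1)).not.1 (by omega)
      have := hμr (A - 1) (by omega)
      omega
    have hnext := h.countP_next_eq_zero_or_lt hv
    have hrestle := count_flatten_le hrest hv
    rcases Nat.eq_zero_or_pos B with hB | hB
    · -- no part exceeds `v`, so `r` starts with `v` and `r.count v ≤ r.length < v`
      have h₁ := (List.lt_countP_le_iff hr hv 0).1 (by omega)
      have h₂ := (List.lt_countP_lt_iff hr v 0).not.1 (by omega)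
      have := r.count_le_length (a := v)
      omega
    · omega

end IsDPP

namespace List

-- `0 < k` keeps rows nonempty, so that `splitRows` terminates; on lists of positive parts
-- it changes nothing.
def rowLength (L : List ℕ) : ℕ :=
  Nat.find (⟨L.length + 1, by simp, by rw [getD_eq_default _ _ (by omega)]; omega⟩ :
    ∃ k, 0 < k ∧ L.getD k 0 ≤ k)

variable {L : List ℕ}

theorem rowLength_pos (L : List ℕ) : 0 < L.rowLength :=
  (Nat.find_spec (p := fun k ↦ 0 < k ∧ L.getD k 0 ≤ k) _).1

theorem getD_rowLength_le (L : List ℕ) : L.getD L.rowLength 0 ≤ L.rowLength :=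
  (Nat.find_spec (p := fun k ↦ 0 < k ∧ L.getD k 0 ≤ k) _).2

theorem lt_getD_of_lt_rowLength (h0 : 0 < L.getD 0 0) {k : ℕ} (hk : k < L.rowLength) :
    k < L.getD k 0 := by
  rcases Nat.eq_zero_or_pos k with rfl | hk0
  · exact h0
  · exact not_le.1 fun h ↦ Nat.find_min _ hk ⟨hk0, h⟩

theorem rowLength_append {r s : List ℕ} (hr : r ≠ []) (hμ : ∀ k < r.length, k < r.getD k 0)
    (hs : s.getD 0 0 ≤ r.length) : (r ++ s).rowLength = r.length := by
  rw [rowLength, Nat.find_eq_iff]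
  refine ⟨⟨length_pos_iff.2 hr, by rwa [getD_append_right _ _ _ _ le_rfl, Nat.sub_self]⟩,
    fun k hk ⟨_, hle⟩ ↦ ?_⟩
  rw [getD_append _ _ _ _ hk] at hle
  exact (hμ k hk).not_ge hle

def splitRows (L : List ℕ) : List (List ℕ) :=
  if L = [] then [] else L.take L.rowLength :: splitRows (L.drop L.rowLength)
termination_by L.length
decreasing_by
  have := L.rowLength_pos
  have := length_pos_iff.2 ‹¬L = []›
  simp only [length_drop]
  omega

theorem splitRows_nil : splitRows [] = [] := by
  rw [splitRows, if_pos rfl]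

theorem splitRows_of_ne_nil (h : L ≠ []) :
    L.splitRows = L.take L.rowLength :: (L.drop L.rowLength).splitRows := by
  rw [splitRows, if_neg h]

theorem getD_splitRows_zero (L : List ℕ) : L.splitRows.getD 0 [] = L.take L.rowLength := by
  rcases eq_or_ne L [] with rfl | h
  · simp [splitRows_nil]
  · simp [splitRows_of_ne_nil h]

theorem flatten_splitRows (L : List ℕ) : L.splitRows.flatten = L := by
  induction L using splitRows.induct with
  | case1 => simp [splitRows_nil]
  | case2 L h ih => rw [splitRows_of_ne_nil h, flatten_cons, ih, take_append_drop]

theorem noSpecialParts_splitRows (hpos : ∀ p ∈ L, 0 < p) : NoSpecialParts L.splitRows := by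
  induction L using splitRows.induct with
  | case1 => simp [splitRows_nil, NoSpecialParts]
  | case2 L h ih =>
    rw [splitRows_of_ne_nil h, noSpecialParts_cons_iff]
    refine ⟨fun k hk ↦ ?_, ih fun p hp ↦ hpos p ((drop_sublist _ _).subset hp)⟩
    have hk' : k < L.rowLength := by simp only [length_take, lt_inf_iff] at hk; omega
    rw [getD_take hk']
    refine lt_getD_of_lt_rowLength ?_ hk'
    rw [getD_eq_getElem _ _ (length_pos_iff.2 h)]
    exact hpos _ (getElem_mem _)

theorem rowLength_lt_getD_zero (hL : L.Pairwise (· ≥ ·)) (hcount : ∀ v ∈ L, L.count v < v)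
    (h : L ≠ []) : L.rowLength < L.getD 0 0 := by
  set c := L.rowLength
  have hmem : L.getD 0 0 ∈ L := by
    rw [getD_eq_getElem _ _ (length_pos_iff.2 h)]
    exact getElem_mem _
  have hpos := pos_of_forall_count_lt hcount _ hmem
  have hc := L.rowLength_pos
  have hlast := lt_getD_of_lt_rowLength hpos (show c - 1 < c by omega)
  have hmono := getD_le_getD hL (Nat.zero_le (c - 1))
  by_contra! hle
  -- otherwise the first `c` parts all equal `L[0] = c`
  have := le_add_count_of_getD_eq hL hpos rfl (show L.getD (c - 1) 0 = L.getD 0 0 by omega)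
  have := hcount _ hmem
  omega

theorem isDPPRow_take_rowLength (hL : L.Pairwise (· ≥ ·)) (hcount : ∀ v ∈ L, L.count v < v)
    (h : L ≠ []) : IsDPPRow (L.take L.rowLength) := by
  have hc := L.rowLength_pos
  refine ⟨by simp only [ne_eq, take_eq_nil_iff, h, or_false]; omega,
    fun p hp ↦ pos_of_forall_count_lt hcount p ((take_sublist _ _).subset hp),
    hL.sublist (take_sublist _ _), ?_⟩
  rw [getD_take hc]
  have := rowLength_lt_getD_zero hL hcount h
  simp only [length_take]
  omega

theorem fitsUnder_take_rowLength (hL : L.Pairwise (· ≥ ·))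
    (hcount : ∀ v ∈ L, L.count v < v) :
    FitsUnder ((L.drop L.rowLength).take (L.drop L.rowLength).rowLength) (L.take L.rowLength) := by
  set c := L.rowLength
  set M := L.drop c
  rcases eq_or_ne M [] with hM | hM
  · simp [hM, FitsUnder]
  have hcL : c < L.length := by simpa [M] using hM
  have hLc : L.getD c 0 ≤ c := L.getD_rowLength_le
  have hM0 : M.getD 0 0 = L.getD c 0 := by rw [getD_drop, add_zero]
  have hrlen : (L.take c).length = c := by simp only [length_take, inf_eq_left]; omega
  refine ⟨fun k hk ↦ ?_, by rwa [getD_take M.rowLength_pos, hM0, hrlen]⟩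
  have hsub : M <+ L := drop_sublist _ _
  have hslen := rowLength_lt_getD_zero (hL.sublist hsub) (hsub.forall_count_lt hcount) hM
  have hk₂ : k < M.rowLength := lt_of_lt_of_le hk (length_take_le _ _)
  have hk₁ : k + 1 < c := by omega
  have hkL : c + k < L.length := by
    have := lt_of_lt_of_le hk (length_take_le' _ _)
    simp only [length_drop, M] at this
    omega
  rw [getD_take hk₂, getD_drop, getD_take hk₁]
  refine (getD_le_getD hL (show k + 1 ≤ c + k by omega)).lt_of_ne fun heq ↦ ?_
  -- otherwise the part `v = L[c + k] ≤ c` fills the `c` places from `k + 1` to `c + k`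
  set v := L.getD (c + k) 0 with hv
  have hmem : v ∈ L := by
    rw [hv, getD_eq_getElem _ _ hkL]
    exact getElem_mem _
  have := le_add_count_of_getD_eq hL (pos_of_forall_count_lt hcount v hmem) heq.symm rfl
  have := hcount v hmem
  have : v ≤ L.getD c 0 := getD_le_getD hL (show c ≤ c + k by omega)
  omega

theorem isDPP_splitRows (hL : L.Pairwise (· ≥ ·)) (hcount : ∀ v ∈ L, L.count v < v) :
    IsDPP L.splitRows := by
  induction L using splitRows.induct with
  | case1 => simp [splitRows_nil, isDPP_nil]
  | case2 L h ih =>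
    rw [splitRows_of_ne_nil h, isDPP_cons_iff, getD_splitRows_zero]
    have hsub : L.drop L.rowLength <+ L := drop_sublist _ _
    exact ⟨isDPPRow_take_rowLength hL hcount h, fitsUnder_take_rowLength hL hcount,
      ih (hL.sublist hsub) (hsub.forall_count_lt hcount)⟩

theorem splitRows_injective : Function.Injective splitRows :=
  Function.LeftInverse.injective flatten_splitRows

end List

theorem IsDPP.splitRows_flatten {rows : List (List ℕ)} (h : IsDPP rows)
    (hμ : NoSpecialParts rows) : rows.flatten.splitRows = rows := by
  induction rows with
  | nil => simp [List.splitRows_nil]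
  | cons r rest ih =>
    obtain ⟨⟨hne, -, -, -⟩, ⟨-, hhead⟩, hrest⟩ := isDPP_cons_iff.1 h
    obtain ⟨hμr, hμrest⟩ := noSpecialParts_cons_iff.1 hμ
    have hlen : (r ++ rest.flatten).rowLength = r.length := by
      refine List.rowLength_append hne hμr ?_
      rcases rest with _ | ⟨s, rest⟩
      · simp
      · obtain ⟨⟨hs, -, -, -⟩, -, -⟩ := isDPP_cons_iff.1 hrest
        rwa [List.flatten_cons, List.getD_append _ _ _ _ (List.length_pos_iff.2 hs)]
    rw [List.flatten_cons, List.splitRows_of_ne_nil (by simp [hne]), hlen, List.take_left,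
      List.drop_left, ih hrest hμrest]

def IsBoundedMultPartition (n : ℕ) (L : List ℕ) : Prop :=
  L.Pairwise (· ≥ ·) ∧ (∀ v ∈ L, v ≤ n) ∧ ∀ v ∈ L, L.count v < v

def boundedMultPartitions : ℕ → Finset (List ℕ)
  | 0 => {[]}
  | n + 1 => (range (n + 1) ×ˢ boundedMultPartitions n).image
      fun pL ↦ List.replicate pL.1 (n + 1) ++ pL.2

namespace IsBoundedMultPartition

variable {n : ℕ} {L : List ℕ}

theorem replicate_append {p : ℕ} (hp : p < n + 1) (h : IsBoundedMultPartition n L) :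
    IsBoundedMultPartition (n + 1) (List.replicate p (n + 1) ++ L) := by
  obtain ⟨hL, hle, hcount⟩ := h
  have hfresh : L.count (n + 1) = 0 := List.count_eq_zero.2 fun h ↦ by
    have := hle _ h
    omega
  refine ⟨List.pairwise_replicate_append hL fun v hv ↦ (hle v hv).trans n.le_succ,
    fun v hv ↦ ?_, fun v hv ↦ ?_⟩
  · rcases List.mem_append.1 hv with hv | hv
    · exact (List.eq_of_mem_replicate hv).le
    · exact (hle v hv).trans n.le_succ
  · rw [List.count_append, List.count_replicate]
    by_cases hvn : v = n + 1
    · simp [hvn, hfresh, hp]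
    · have hv' : v ∈ L := by simpa [List.mem_replicate, hvn] using hv
      simpa [Ne.symm hvn] using hcount v hv'

theorem filter_le (h : IsBoundedMultPartition (n + 1) L) :
    IsBoundedMultPartition n (L.filter (· ≤ n)) := by
  obtain ⟨hL, -, hcount⟩ := h
  have hsub : (L.filter (· ≤ n)).Sublist L := List.filter_sublist
  exact ⟨hL.sublist hsub, fun v hv ↦ by simpa using (List.mem_filter.1 hv).2,
    hsub.forall_count_lt hcount⟩

theorem count_lt (h : IsBoundedMultPartition n L) (v : ℕ) (hv : 0 < v) : L.count v < v := by
  rcases Nat.eq_zero_or_pos (L.count v) with h0 | h0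
  · omega
  · exact h.2.2 v (List.count_pos_iff.1 h0)

end IsBoundedMultPartition

theorem mem_boundedMultPartitions {n : ℕ} {L : List ℕ} :
    L ∈ boundedMultPartitions n ↔ IsBoundedMultPartition n L := by
  induction n generalizing L with
  | zero =>
    rw [boundedMultPartitions, mem_singleton]
    refine ⟨fun h ↦ by simp [h, IsBoundedMultPartition], fun ⟨_, hle, hcount⟩ ↦
      List.eq_nil_iff_forall_not_mem.2 fun v hv ↦ ?_⟩
    have := hcount v hv
    have := hle v hv
    omega
  | succ n ih =>
    simp only [boundedMultPartitions, mem_image, mem_product, mem_range, Prod.exists, ih]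
    constructor
    · rintro ⟨p, L', ⟨hp, hL'⟩, rfl⟩
      exact hL'.replicate_append hp
    · intro h
      exact ⟨_, _, ⟨h.count_lt _ n.succ_pos, h.filter_le⟩,
        List.replicate_count_append_filter_le h.1 h.2.1⟩

theorem count_succ_eq_zero_of_mem_boundedMultPartitions {n : ℕ} {L : List ℕ}
    (h : L ∈ boundedMultPartitions n) : L.count (n + 1) = 0 :=
  List.count_eq_zero.2 fun hmem ↦ by
    have := (mem_boundedMultPartitions.1 h).2.1 _ hmem
    omega

theorem sum_boundedMultPartitions_succ {M : Type*} [AddCommMonoid M] (f : List ℕ → M)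
    (n : ℕ) : ∑ L ∈ boundedMultPartitions (n + 1), f L =
      ∑ p ∈ range (n + 1), ∑ L ∈ boundedMultPartitions n,
        f (List.replicate p (n + 1) ++ L) := by
  rw [boundedMultPartitions, sum_image, sum_product]
  rintro ⟨p, L⟩ hL ⟨q, L'⟩ hL' heq
  simp only [coe_product, Set.mem_prod, mem_coe] at hL hL'
  have hpq : p = q := by
    simpa [count_succ_eq_zero_of_mem_boundedMultPartitions hL.2,
      count_succ_eq_zero_of_mem_boundedMultPartitions hL'.2] using congr(List.count (n + 1) $heq)
  subst hpq
  simpa using List.append_cancel_left heq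

section Sums

variable {R : Type*} [CommSemiring R]

theorem sum_pow_length_boundedMultPartitions (x : R) (n : ℕ) :
    ∑ L ∈ boundedMultPartitions n, x ^ L.length =
      ∏ m ∈ range n, ∑ i ∈ range (m + 1), x ^ i := by
  induction n with
  | zero => simp [boundedMultPartitions]
  | succ n ih =>
    simp only [sum_boundedMultPartitions_succ, List.length_append, List.length_replicate, pow_add,
      ← mul_sum, ← sum_mul, ih, prod_range_succ, mul_comm]

theorem sum_pow_length_mul_pow_count_boundedMultPartitions (x z : R) (n : ℕ) :
    ∑ L ∈ boundedMultPartitions (n + 1), x ^ L.length * z ^ L.count (n + 1) =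
      (∑ i ∈ range (n + 1), (x * z) ^ i) *
        ∏ m ∈ range n, ∑ i ∈ range (m + 1), x ^ i := by
  rw [sum_boundedMultPartitions_succ, ← sum_pow_length_boundedMultPartitions, sum_mul_sum]
  refine sum_congr rfl fun p _ ↦ sum_congr rfl fun L hL ↦ ?_
  simp only [List.length_append, List.length_replicate, List.count_append,
    List.count_replicate_self, count_succ_eq_zero_of_mem_boundedMultPartitions hL, add_zero,
    pow_add, mul_pow]
  ring

end Sums

theorem setOf_mem_DPPset_muDPP_eq_zero (n : ℕ) :
    {D | D ∈ DPPset n ∧ muDPP D = 0} =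
      List.splitRows '' (boundedMultPartitions n : Set (List ℕ)) := by
  ext D
  simp only [Set.mem_ofPred_eq, Set.mem_image, mem_coe, mem_boundedMultPartitions, DPPset,
    muDPP_eq_zero_iff]
  constructor
  · rintro ⟨⟨hD, hle⟩, hμ⟩
    refine ⟨D.flatten, ⟨hD.pairwise_flatten hμ, fun v hv ↦ ?_, fun v hv ↦ ?_⟩,
      hD.splitRows_flatten hμ⟩
    · obtain ⟨r, hr, hv⟩ := List.mem_flatten.1 hv
      exact hle r hr v hv
    · obtain ⟨r, hr, hv⟩ := List.mem_flatten.1 hv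
      exact hD.count_flatten_lt hμ ((hD.1 r hr).2.1 v hv)
  · rintro ⟨L, ⟨hL, hle, hcount⟩, rfl⟩
    refine ⟨⟨List.isDPP_splitRows hL hcount, fun r hr v hv ↦ hle v ?_⟩,
      List.noSpecialParts_splitRows (List.pos_of_forall_count_lt hcount)⟩
    rw [← L.flatten_splitRows]
    exact List.mem_flatten.2 ⟨r, hr, hv⟩

/-- Weighted enumeration of permutation matrices (ASMs with μ = 0) and of DPPs with no
special parts: both generating functions equal [n]_{xz} [n−1]_x!. -/
theorem mu_zero_generating_functions (n : ℕ) (hn : 0 < n) (x z : ℂ) :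
    ((∑ᶠ A ∈ {A : Matrix (Fin n) (Fin n) ℤ | IsASM n A ∧ muASM A = 0},
        x ^ nuASM A * z ^ rhoASM A) =
      (∑ i ∈ Finset.range n, (x * z) ^ i) *
        ∏ m ∈ Finset.range (n - 1), ∑ i ∈ Finset.range (m + 1), x ^ i) ∧
    ((∑ᶠ D ∈ {D | D ∈ DPPset n ∧ muDPP D = 0},
        x ^ nuDPP D * z ^ rhoDPP n D) =
      (∑ i ∈ Finset.range n, (x * z) ^ i) *
        ∏ m ∈ Finset.range (n - 1), ∑ i ∈ Finset.range (m + 1), x ^ i) := by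
  obtain ⟨m, rfl⟩ := Nat.exists_eq_add_one_of_ne_zero hn.ne'
  constructor
  · rw [setOf_isASM_muASM_eq_zero, finsum_mem_range Equiv.Perm.permMatrix_injective,
      finsum_eq_sum_of_fintype]
    simp only [nuASM_permMatrix, rhoASM_permMatrix, zpow_natCast]
    rw [Equiv.Perm.sum_pow_inversionCount_mul_pow_apply_zero, Equiv.Perm.sum_pow_inversionCount,
      Nat.add_sub_cancel]
  · rw [setOf_mem_DPPset_muDPP_eq_zero, finsum_mem_image List.splitRows_injective.injOn,
      finsum_mem_coe_finset, Nat.add_sub_cancel,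
      ← sum_pow_length_mul_pow_count_boundedMultPartitions]
    refine sum_congr rfl fun L hL ↦ ?_
    obtain ⟨-, -, hcount⟩ := mem_boundedMultPartitions.1 hL
    have hμ := List.noSpecialParts_splitRows (List.pos_of_forall_count_lt hcount)
    rw [nuDPP_eq_length_flatten hμ, rhoDPP_eq_count_flatten, L.flatten_splitRows]
end

section
/- For every integer n ≥ 2 and all complex numbers x, y: ∑_{A ∈ ASM(n), ρ(A)=0} x^{ν(A)} y^{μ(A)} = ∑_{A' ∈ ASM(n−1)} x^{ν(A')} y^{μ(A')}, and ∑_{D ∈ DPP(n), ρ(D)=0} x^{ν(D)} y^{μ(D)} = ∑_{D' ∈ DPP(n−1)} x^{ν(D')} y^{μ(D')}. -/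
open Finset Matrix

/-!
An ASM of order `n` with `ρ = 0` has its first row equal to the first unit vector: the first
nonzero entry of every row and column of an ASM is `1`, because the partial sums of a
sequence whose nonzero entries alternate in sign oscillate between `0` and its first nonzero
entry. Then the first column is also the first unit vector, so the ASM is `diag(1, B)` with `B`
an ASM of order `n - 1`, and `ν` and `μ` are unchanged by this extension. A DPP with parts at
most `n` and none equal to `n` is just a DPP with parts at most `n - 1`.
-/

def SignAlternating {M : Type*} [AddGroup M] {N : ℕ} (f : Fin N → M) : Prop :=
  ∀ j₁ j₂, j₁ < j₂ → f j₁ ≠ 0 → f j₂ ≠ 0 → (∀ j, j₁ < j → j < j₂ → f j = 0) → f j₂ = -f j₁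

namespace SignAlternating

variable {M : Type*} [AddCommGroup M] {N : ℕ}

theorem tail {f : Fin (N + 1) → M} (hf : SignAlternating f) :
    SignAlternating (Fin.tail f) := by
  intro j₁ j₂ hlt h₁ h₂ hmid
  refine hf j₁.succ j₂.succ (Fin.succ_lt_succ_iff.2 hlt) h₁ h₂ fun j hj₁ hj₂ => ?_
  cases j using Fin.cases with
  | zero => exact absurd hj₁ (Fin.not_lt_zero _)
  | succ j => exact hmid j (Fin.succ_lt_succ_iff.1 hj₁) (Fin.succ_lt_succ_iff.1 hj₂)

theorem cons_zero {g : Fin N → M} (hg : SignAlternating g) :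
    SignAlternating (Fin.cons 0 g : Fin (N + 1) → M) := by
  intro j₁ j₂ hlt h₁ h₂ hmid
  cases j₁ using Fin.cases with
  | zero => exact absurd rfl h₁
  | succ j₁ =>
    cases j₂ using Fin.cases with
    | zero => exact absurd hlt (Fin.not_lt_zero _)
    | succ j₂ =>
      exact hg j₁ j₂ (Fin.succ_lt_succ_iff.1 hlt) h₁ h₂ fun j hj₁ hj₂ =>
        hmid j.succ (Fin.succ_lt_succ_iff.2 hj₁) (Fin.succ_lt_succ_iff.2 hj₂)

theorem cons_zero_iff {g : Fin N → M} :
    SignAlternating (Fin.cons 0 g : Fin (N + 1) → M) ↔ SignAlternating g :=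
  ⟨tail, cons_zero⟩

theorem cons_const_zero (a : M) : SignAlternating (Fin.cons a 0 : Fin (N + 1) → M) := by
  intro j₁ j₂ hlt _ h₂
  cases j₂ using Fin.cases with
  | zero => exact absurd hlt (Fin.not_lt_zero _)
  | succ j₂ => exact absurd rfl h₂

theorem sum_eq_zero_or_exists {f : Fin N → M} (hf : SignAlternating f) :
    ∑ j, f j = 0 ∨ ∃ j, f j ≠ 0 ∧ (∀ k < j, f k = 0) ∧ ∑ i, f i = f j := by
  induction N with
  | zero => exact Or.inl (Finset.sum_of_isEmpty _)
  | succ N ih =>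
    rw [Fin.sum_univ_succ]
    rcases ih hf.tail with htail | ⟨j, hj, hbefore, htail⟩
    · by_cases h0 : f 0 = 0
      · exact Or.inl (by simp only [Fin.tail] at htail; rw [h0, htail, add_zero])
      · exact Or.inr ⟨0, h0, fun k hk => absurd hk (Fin.not_lt_zero k),
          by simp only [Fin.tail] at htail; rw [htail, add_zero]⟩
    · simp only [Fin.tail] at hj hbefore htail
      by_cases h0 : f 0 = 0
      · refine Or.inr ⟨j.succ, hj, fun k hk => ?_, by rw [h0, htail, zero_add]⟩
        cases k using Fin.cases with
        | zero => exact h0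
        | succ k => exact hbefore k (Fin.succ_lt_succ_iff.1 hk)
      · have hopp : f j.succ = -f 0 := hf 0 j.succ (Fin.succ_pos j) h0 hj fun k hk₁ hk₂ => by
          cases k using Fin.cases with
          | zero => exact absurd hk₁ (lt_irrefl 0)
          | succ k => exact hbefore k (Fin.succ_lt_succ_iff.1 hk₂)
        exact Or.inl (by rw [htail, hopp, add_neg_cancel])

theorem sum_eq_zero_or_eq_apply_zero {f : Fin (N + 1) → M} (hf : SignAlternating f)
    (h0 : f 0 ≠ 0) : ∑ j, f j = 0 ∨ ∑ j, f j = f 0 := by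
  rcases hf.sum_eq_zero_or_exists with hsum | ⟨j, hj, hbefore, hsum⟩
  · exact Or.inl hsum
  · obtain rfl : j = 0 := by
      by_contra hne
      exact h0 (hbefore 0 (Fin.pos_of_ne_zero hne))
    exact Or.inr hsum

theorem apply_zero_eq_one {f : Fin (N + 1) → ℤ} (hf : SignAlternating f)
    (hsum : ∑ j, f j = 1) (h0 : f 0 ≠ 0) : f 0 = 1 := by
  rcases hf.sum_eq_zero_or_eq_apply_zero h0 with h | h <;> rw [hsum] at h
  · exact absurd h one_ne_zero
  · exact h.symm

end SignAlternating

theorem Fin.apply_succ_eq_zero_of_sum_eq_apply_zero {M : Type*} [AddCommMonoid M]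
    [PartialOrder M] [IsOrderedCancelAddMonoid M] {N : ℕ} {f : Fin (N + 1) → M}
    (hf : ∀ j, 0 ≤ f j) (hsum : ∑ j, f j = f 0) (j : Fin N) : f j.succ = 0 := by
  rw [Fin.sum_univ_succ, add_eq_left] at hsum
  exact (Finset.sum_eq_zero_iff_of_nonneg fun j _ => hf j.succ).1 hsum j (Finset.mem_univ j)

theorem isASM_iff {n : ℕ} {A : Matrix (Fin n) (Fin n) ℤ} :
    IsASM n A ↔ (∀ i j, A i j = -1 ∨ A i j = 0 ∨ A i j = 1) ∧ (∀ i, ∑ j, A i j = 1) ∧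
      (∀ j, ∑ i, A i j = 1) ∧ (∀ i, SignAlternating (A i)) ∧
      (∀ j, SignAlternating fun i => A i j) :=
  Iff.rfl

theorem rhoASM_eq_zero_iff {m : ℕ} {A : Matrix (Fin (m + 1)) (Fin (m + 1)) ℤ} :
    rhoASM A = 0 ↔ ∀ j j', j < j' → A 0 j = 0 → A 0 j' ≠ 1 := by
  classical
  simp only [rhoASM, Finset.card_eq_zero, Finset.filter_eq_empty_iff, Finset.mem_univ,
    true_implies, Fin.val_eq_zero_iff, not_exists, not_and, forall_eq]
  exact ⟨fun h j j' hlt h0 => @h j h0 j' hlt, fun h j h0 j' hlt => h j j' hlt h0⟩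

def blockDiagOne {R : Type*} [Zero R] [One R] {m : ℕ} (B : Matrix (Fin m) (Fin m) R) :
    Matrix (Fin (m + 1)) (Fin (m + 1)) R :=
  Fin.cons (Fin.cons 1 0) fun i => Fin.cons 0 (B i)

section blockDiagOne

variable {R : Type*} [Zero R] [One R] {m : ℕ} (B : Matrix (Fin m) (Fin m) R)

@[simp] theorem blockDiagOne_zero_zero : blockDiagOne B 0 0 = 1 := rfl

@[simp] theorem blockDiagOne_zero_succ (j : Fin m) : blockDiagOne B 0 j.succ = 0 := rfl

@[simp] theorem blockDiagOne_succ_zero (i : Fin m) : blockDiagOne B i.succ 0 = 0 := rfl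

@[simp] theorem blockDiagOne_succ_succ (i j : Fin m) : blockDiagOne B i.succ j.succ = B i j :=
  rfl

theorem blockDiagOne_row_zero : blockDiagOne B 0 = Fin.cons 1 0 := rfl

theorem blockDiagOne_row_succ (i : Fin m) : blockDiagOne B i.succ = Fin.cons 0 (B i) := rfl

theorem blockDiagOne_col_zero : (fun i => blockDiagOne B i 0) = Fin.cons 1 0 := by
  ext i
  cases i using Fin.cases <;> rfl

theorem blockDiagOne_col_succ (j : Fin m) :
    (fun i => blockDiagOne B i j.succ) = Fin.cons 0 fun i => B i j := by
  ext i
  cases i using Fin.cases <;> rfl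

theorem blockDiagOne_injective : Function.Injective (blockDiagOne (R := R) (m := m)) :=
  fun _ _ h => funext₂ fun i j => congr_fun₂ h i.succ j.succ

theorem eq_blockDiagOne_submatrix {A : Matrix (Fin (m + 1)) (Fin (m + 1)) R}
    (hrow : ∀ j, A 0 j = blockDiagOne B 0 j) (hcol : ∀ i, A i 0 = blockDiagOne B i 0) :
    A = blockDiagOne (A.submatrix Fin.succ Fin.succ) := by
  ext i j
  cases i using Fin.cases with
  | zero => exact hrow j
  | succ i =>
    cases j using Fin.cases with
    | zero => exact hcol i.succ
    | succ j => rfl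

end blockDiagOne

section blockDiagOneASM

variable {m : ℕ} (B : Matrix (Fin m) (Fin m) ℤ)

theorem isASM_blockDiagOne_iff : IsASM (m + 1) (blockDiagOne B) ↔ IsASM m B := by
  simp only [isASM_iff, Fin.forall_fin_succ, Fin.sum_univ_succ, blockDiagOne_row_zero,
    blockDiagOne_row_succ, blockDiagOne_col_zero, blockDiagOne_col_succ,
    SignAlternating.cons_zero_iff, SignAlternating.cons_const_zero, blockDiagOne_zero_zero,
    blockDiagOne_zero_succ, blockDiagOne_succ_zero, blockDiagOne_succ_succ]
  simp

theorem rhoASM_blockDiagOne : rhoASM (blockDiagOne B) = 0 :=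
  rhoASM_eq_zero_iff.2 fun j j' hlt _ => by
    cases j' using Fin.cases with
    | zero => exact absurd hlt (Fin.not_lt_zero j)
    | succ j' => simp

theorem nuASM_blockDiagOne : nuASM (blockDiagOne B) = nuASM B := by
  simp [nuASM, Fin.sum_univ_succ, Fin.succ_lt_succ_iff, Fin.succ_le_succ_iff, Fin.succ_ne_zero]

theorem muASM_blockDiagOne : muASM (blockDiagOne B) = muASM B := by
  rw [muASM, muASM, Finset.card_filter, Finset.card_filter, Fintype.sum_prod_type,
    Fintype.sum_prod_type]
  simp only [Fin.sum_univ_succ,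
    blockDiagOne_zero_zero, blockDiagOne_zero_succ, blockDiagOne_succ_zero,
    blockDiagOne_succ_succ, Int.reduceEq, Int.reduceNeg, if_false, Finset.sum_const_zero, zero_add]
  rfl

end blockDiagOneASM

/-- `ρ = 0` forces `A 0 0 = 1`; row `0` and column `0` are then nonnegative with sum `A 0 0`. -/
theorem eq_blockDiagOne_of_isASM_of_rhoASM_eq_zero {m : ℕ}
    {A : Matrix (Fin (m + 1)) (Fin (m + 1)) ℤ} (hA : IsASM (m + 1) A) (hρ : rhoASM A = 0) :
    A = blockDiagOne (A.submatrix Fin.succ Fin.succ) := by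
  obtain ⟨-, hrow, hcol, haltRow, haltCol⟩ := isASM_iff.1 hA
  have hrow0 : ∀ j, A 0 j ≠ 0 → A 0 j = 1 := fun j =>
    (haltCol j).apply_zero_eq_one (hcol j)
  have hcol0 : ∀ i, A i 0 ≠ 0 → A i 0 = 1 := fun i =>
    (haltRow i).apply_zero_eq_one (hrow i)
  have hA00 : A 0 0 = 1 := by
    refine hrow0 0 fun h00 => one_ne_zero (α := ℤ) ?_
    rw [← hrow 0, Fin.sum_univ_succ, h00, zero_add]
    refine Finset.sum_eq_zero fun j _ => ?_
    by_contra hj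
    exact rhoASM_eq_zero_iff.1 hρ 0 j.succ (Fin.succ_pos j) h00 (hrow0 _ hj)
  have nonneg_of_eq_one {a : ℤ} (h : a ≠ 0 → a = 1) : 0 ≤ a := by
    by_cases ha : a = 0 <;> simp [ha, h]
  refine eq_blockDiagOne_submatrix (A.submatrix Fin.succ Fin.succ) (fun j => ?_) (fun i => ?_)
  · cases j using Fin.cases with
    | zero => exact hA00
    | succ j =>
      exact Fin.apply_succ_eq_zero_of_sum_eq_apply_zero (fun j => nonneg_of_eq_one (hrow0 j))
        (by rw [hrow, hA00]) j
  · cases i using Fin.cases with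
    | zero => exact hA00
    | succ i =>
      exact Fin.apply_succ_eq_zero_of_sum_eq_apply_zero (f := fun i => A i 0)
        (fun i => nonneg_of_eq_one (hcol0 i)) (by rw [hcol, hA00]) i

theorem setOf_isASM_rhoASM_eq_zero (m : ℕ) :
    {A : Matrix (Fin (m + 1)) (Fin (m + 1)) ℤ | IsASM (m + 1) A ∧ rhoASM A = 0} =
      blockDiagOne '' {B | IsASM m B} := by
  ext A
  constructor
  · rintro ⟨hA, hρ⟩
    have hA' := eq_blockDiagOne_of_isASM_of_rhoASM_eq_zero hA hρ
    exact ⟨_, (isASM_blockDiagOne_iff _).1 (hA' ▸ hA), hA'.symm⟩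
  · rintro ⟨B, hB, rfl⟩
    exact ⟨(isASM_blockDiagOne_iff B).2 hB, rhoASM_blockDiagOne B⟩

theorem rhoDPP_eq_zero_iff {n : ℕ} {D : List (List ℕ)} : rhoDPP n D = 0 ↔ ∀ r ∈ D, n ∉ r := by
  simp [rhoDPP, List.sum_eq_zero_iff, List.count_eq_zero]

theorem setOf_mem_DPPset_rhoDPP_eq_zero (m : ℕ) :
    {D | D ∈ DPPset (m + 1) ∧ rhoDPP (m + 1) D = 0} = DPPset m := by
  ext D
  simp only [Set.mem_ofPred_eq, DPPset, rhoDPP_eq_zero_iff]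
  constructor
  · rintro ⟨⟨hD, hle⟩, hρ⟩
    refine ⟨hD, fun r hr p hp => ?_⟩
    have hne : p ≠ m + 1 := by rintro rfl; exact hρ r hr hp
    have := hle r hr p hp
    omega
  · rintro ⟨hD, hle⟩
    exact ⟨⟨hD, fun r hr p hp => (hle r hr p hp).trans m.le_succ⟩,
      fun r hr hmem => by have := hle r hr _ hmem; omega⟩

/-- The ρ = 0 part of the order-n generating function equals the full order-(n−1)
generating function, for both ASMs and DPPs. -/
theorem rho_zero_reduction (n : ℕ) (hn : 2 ≤ n) (x y : ℂ) :
    ((∑ᶠ A ∈ {A : Matrix (Fin n) (Fin n) ℤ | IsASM n A ∧ rhoASM A = 0},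
        x ^ nuASM A * y ^ muASM A) =
      ∑ᶠ A ∈ {A : Matrix (Fin (n - 1)) (Fin (n - 1)) ℤ | IsASM (n - 1) A},
        x ^ nuASM A * y ^ muASM A) ∧
    ((∑ᶠ D ∈ {D | D ∈ DPPset n ∧ rhoDPP n D = 0},
        x ^ nuDPP D * y ^ muDPP D) =
      ∑ᶠ D ∈ DPPset (n - 1), x ^ nuDPP D * y ^ muDPP D) := by
  obtain ⟨m, rfl⟩ : ∃ m, n = m + 1 := ⟨n - 1, by omega⟩
  rw [Nat.add_sub_cancel, setOf_isASM_rhoASM_eq_zero, setOf_mem_DPPset_rhoDPP_eq_zero]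
  refine ⟨?_, rfl⟩
  rw [finsum_mem_image blockDiagOne_injective.injOn]
  simp only [nuASM_blockDiagOne, muASM_blockDiagOne]
end
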